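/- Let A = ℚ[x₁, x₂, ...] with the 'exponential shift' coaction: y_n defined by Σ_{n≥0} yₙ = (Σ_{n≥0} xₙ)(Σ_{k≥0} u^k/k!) collecting terms of degree n (deg xₙ = n, deg u = 1, x₀ = 1), i.e., yₙ = Σ_{k=0}^{n} x_{n-k} u^k / k!. Let d be the derivation on A with d(xₙ) = x_{n-1}. Then a polynomial f ∈ A satisfies f(y₁, y₂, ...) = f(x₁, x₂, ...) identically in u if and only if d(f) = 0. -/
import Mathlib


open MvPolynomial Finset

/-- `xSeq m` is `xₘ`, with the convention `x₀ = 1`; for `m ≥ 1`, `xₘ = X (m-1)`. -/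
noncomputable def xSeq : ℕ → MvPolynomial ℕ ℚ :=
  fun m => if m = 0 then 1 else X (m - 1)

/-- The derivation with `d xₙ = x_{n-1}` (here with the convention `x₀ = 1`). -/
noncomputable def dShift : Derivation ℚ (MvPolynomial ℕ ℚ) (MvPolynomial ℕ ℚ) :=
  MvPolynomial.mkDerivation ℚ (fun i => xSeq i)

/-- `ySeq n = yₙ = Σ_{k=0}^n x_{n-k} uᵏ / k!` in `A[u]`. -/
noncomputable def ySeq (n : ℕ) : Polynomial (MvPolynomial ℕ ℚ) :=
  ∑ k ∈ range (n + 1),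
    (k.factorial : ℚ)⁻¹ • (Polynomial.C (xSeq (n - k)) * Polynomial.X ^ k)

/-- The coaction `Φ : A → A[u]`, `xₙ ↦ yₙ`. -/
noncomputable abbrev phiMap : MvPolynomial ℕ ℚ →ₐ[ℚ] Polynomial (MvPolynomial ℕ ℚ) :=
  MvPolynomial.aeval (fun i : ℕ => ySeq (i + 1))

lemma ySeq_zero : ySeq 0 = 1 := by
  simp [ySeq, xSeq]

lemma ySeq_deriv (n : ℕ) : Polynomial.derivative (ySeq (n + 1)) = ySeq n := by
  unfold ySeq
  rw [map_sum, Finset.sum_range_succ']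
  simp only [Polynomial.derivative_smul, Polynomial.derivative_C_mul,
    Polynomial.derivative_X_pow, pow_zero, Polynomial.derivative_one, mul_zero, smul_zero,
    add_zero]
  refine Finset.sum_congr rfl fun k _ => ?_
  have h : (n + 1 - (k + 1)) = n - k := by omega
  have hc : Polynomial.C (((k+1:ℕ) : MvPolynomial ℕ ℚ)) * Polynomial.X ^ k
      = ((k+1:ℚ)) • (Polynomial.X ^ k : Polynomial (MvPolynomial ℕ ℚ)) := by
    rw [Polynomial.C_eq_natCast, ← nsmul_eq_mul, ← Nat.cast_smul_eq_nsmul ℚ]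
    push_cast
    ring_nf
  rw [h, show k + 1 - 1 = k from rfl, hc, mul_smul_comm, smul_smul]
  congr 1
  rw [Nat.factorial_succ]
  push_cast
  have hk : (k.factorial : ℚ) ≠ 0 := by exact_mod_cast k.factorial_ne_zero
  field_simp

lemma phi_X (i : ℕ) : phiMap (X i) = ySeq (i + 1) := by simp

lemma phi_xSeq (i : ℕ) : phiMap (xSeq i) = ySeq i := by
  cases i with
  | zero => simp [xSeq, ySeq_zero]
  | succ n => simp [xSeq]

/-- `Φ` intertwines `d` with `d/du`. -/
lemma phi_deriv (f : MvPolynomial ℕ ℚ) :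
    Polynomial.derivative (phiMap f) = phiMap (dShift f) := by
  induction f using MvPolynomial.induction_on with
  | C a => simp [dShift]
  | add f g hf hg => simp [hf, hg]
  | mul_X f i hf =>
      have hdx : dShift (X i) = xSeq i := by
        simp [dShift, mkDerivation_X]
      rw [map_mul, Polynomial.derivative_mul, hf, phi_X, ySeq_deriv, Derivation.leibniz,
        smul_eq_mul, smul_eq_mul, map_add, map_mul, map_mul, hdx, phi_xSeq, phi_X]
      ring

/-- Evaluating `Φ f` at `u = 0` recovers `f`. -/
lemma coeff_zero_phi (f : MvPolynomial ℕ ℚ) : (phiMap f).coeff 0 = f := by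
  have h : (Polynomial.evalRingHom (0 : MvPolynomial ℕ ℚ)).comp phiMap.toRingHom
      = RingHom.id _ := by
    apply MvPolynomial.ringHom_ext
    · intro a; simp
    · intro i
      simp only [RingHom.comp_apply, RingHom.id_apply, AlgHom.toRingHom_eq_coe,
        RingHom.coe_coe, phi_X, Polynomial.coe_evalRingHom]
      rw [ySeq, Polynomial.eval_finset_sum, Finset.sum_eq_single 0]
      · simp [xSeq]
      · intro k _ hk
        simp [zero_pow hk]
      · simp
  have h2 := RingHom.congr_fun h f
  simpa [Polynomial.coeff_zero_eq_eval_zero] using h2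

/-- A polynomial `f ∈ A = ℚ[x₁, x₂, …]` is invariant under the exponential shift
`xₙ ↦ yₙ = Σ x_{n-k} uᵏ/k!` (i.e. `f(y) = f(x)` identically in `u`) if and only if
`d f = 0`, where `d` is the derivation with `d xₙ = x_{n-1}`. -/
theorem stmt_15 :
    ∀ f : MvPolynomial ℕ ℚ,
      (MvPolynomial.aeval (fun i : ℕ => ySeq (i + 1)) f = Polynomial.C f)
        ↔ dShift f = 0 := by
  intro f
  constructor
  · intro h
    have h2 : phiMap (dShift f) = 0 := by
      rw [← phi_deriv, show phiMap f = Polynomial.C f from h, Polynomial.derivative_C]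
    have h3 := coeff_zero_phi (dShift f)
    rw [h2] at h3
    simpa using h3.symm
  · intro h
    have hd : Polynomial.derivative (phiMap f) = 0 := by
      rw [phi_deriv, h, map_zero]
    have hdeg : (phiMap f).natDegree = 0 :=
      Polynomial.natDegree_eq_zero_of_derivative_eq_zero hd
    calc phiMap f = Polynomial.C ((phiMap f).coeff 0) :=
          Polynomial.eq_C_of_natDegree_eq_zero hdeg
      _ = Polynomial.C f := by rw [coeff_zero_phi]
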